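/- arXiv:1503.05950 — 2 statements merged into one kernel-verified Lean document; each statement's English description precedes it below -/
import Mathlib

section
/- Key identity: for μ ∈ ℝ^n with σ_{k-1}(μ|n) ≠ 0 and any i ∈ {1,…,n−1}, σ_{k-1}(μ|i) · σ_{k-1}(μ|n) = (σ_{k-1}(μ|i,n))² − σ_{k-2}(μ|i,n)·σ_k(μ|i,n) + σ_{k-2}(μ|i,n)·σ_k(μ). -/
open Finset

noncomputable def esym {n : ℕ} (s : Finset (Fin n)) (μ : Fin n → ℝ) (k : ℕ) : ℝ :=
  ∑ t ∈ s.powersetCard k, ∏ j ∈ t, μ j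

lemma esym_insert {n : ℕ} {s : Finset (Fin n)} {x : Fin n} (hx : x ∉ s)
    (μ : Fin n → ℝ) (j : ℕ) :
    esym (insert x s) μ (j + 1) = esym s μ (j + 1) + μ x * esym s μ j := by
  unfold esym
  rw [Finset.powersetCard_succ_insert hx, Finset.sum_union, Finset.sum_image, Finset.mul_sum]
  · congr 1
    refine Finset.sum_congr rfl fun t ht => ?_
    rw [Finset.prod_insert fun hxt => hx ((Finset.mem_powersetCard.mp ht).1 hxt)]
  · intro a ha b hb hab
    have hxa : x ∉ a := fun h => hx ((Finset.mem_powersetCard.mp ha).1 h)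
    have hxb : x ∉ b := fun h => hx ((Finset.mem_powersetCard.mp hb).1 h)
    rw [← Finset.erase_insert hxa, hab, Finset.erase_insert hxb]
  · rw [Finset.disjoint_left]
    intro t ht ht'
    obtain ⟨u, hu, rfl⟩ := Finset.mem_image.mp ht'
    exact hx ((Finset.mem_powersetCard.mp ht).1 (Finset.mem_insert_self x u))

theorem stmt7 (n k : ℕ) (hn : 3 ≤ n) (hk : 2 ≤ k) (hkn : k ≤ n - 1)
    (μ : Fin n → ℝ) (lst : Fin n) (hlst : (lst : ℕ) = n - 1)
    (i : Fin n) (hi : i ≠ lst)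
    (hne : esym (Finset.univ.erase lst) μ (k - 1) ≠ 0) :
    esym (Finset.univ.erase i) μ (k - 1) * esym (Finset.univ.erase lst) μ (k - 1) =
      (esym ((Finset.univ.erase i).erase lst) μ (k - 1)) ^ 2
        - esym ((Finset.univ.erase i).erase lst) μ (k - 2)
            * esym ((Finset.univ.erase i).erase lst) μ k
        + esym ((Finset.univ.erase i).erase lst) μ (k - 2) * esym Finset.univ μ k := by
  obtain ⟨m, rfl⟩ : ∃ m, k = m + 2 := ⟨k - 2, by omega⟩
  set S := ((Finset.univ.erase i).erase lst) with hS
  have hlstS : lst ∉ S := Finset.notMem_erase _ _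
  have hiS : i ∉ S := by
    rw [hS, Finset.erase_right_comm]
    exact Finset.notMem_erase _ _
  have h1 : (Finset.univ : Finset (Fin n)).erase i = insert lst S :=
    (Finset.insert_erase (Finset.mem_erase.mpr ⟨Ne.symm hi, Finset.mem_univ _⟩)).symm
  have h2 : (Finset.univ : Finset (Fin n)).erase lst = insert i S := by
    rw [hS, Finset.erase_right_comm]
    exact (Finset.insert_erase (Finset.mem_erase.mpr ⟨hi, Finset.mem_univ _⟩)).symm
  have h3 : (Finset.univ : Finset (Fin n)) = insert i (insert lst S) := by
    rw [← h1, Finset.insert_erase (Finset.mem_univ i)]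
  have hiIns : i ∉ insert lst S := by simp [hi, hiS]
  have e1 := esym_insert hlstS μ m
  have e2 := esym_insert hiS μ m
  have e3 := esym_insert hiIns μ (m + 1)
  have e4 := esym_insert hlstS μ (m + 1)
  have e5 := esym_insert hlstS μ m
  rw [h1, h2, h3]
  simp only [show m + 2 - 1 = m + 1 from rfl, show m + 2 - 2 = m from rfl,
    show m + 2 = m + 1 + 1 from rfl]
  rw [e1, e2, e3, e4, e5]
  ring
end

section
/- Lower bound from Newton's inequality: for μ ∈ ℝ^n, i ∈ {1,…,n−1}, with M = σ_k(μ) and σ_{k-1}(μ|n) > 0, one has σ_{k-1}(μ|i) ≥ (1/σ_{k-1}(μ|n)) · { [1 − (k−1)(n−k−1)/(k(n−k))] (σ_{k-1}(μ|i,n))² + σ_{k-2}(μ|i,n) M }. -/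
/-!
Let `S` be the index set with `i` and `lst` removed and `E_j = σ_j(S)`. Expanding along the two
removed entries, `σ_{k-1}(μ|i) = E_{k-1} + μ_lst E_{k-2}`, `σ_{k-1}(μ|lst) = E_{k-1} + μ_i E_{k-2}`
and `M = E_k + (μ_i + μ_lst) E_{k-1} + μ_i μ_lst E_{k-2}`, so that
`σ_{k-1}(μ|i) σ_{k-1}(μ|lst) - E_{k-2} M = E_{k-1}² - E_{k-2} E_k`.
The claim is therefore Newton's inequality `k (n-k) E_{k-2} E_k ≤ (k-1)(n-k-1) E_{k-1}²` for the
`n - 2` numbers indexed by `S`. That inequality is proved in the classical way: real-rootedness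
of `∏ (X + μ_j)` survives differentiation (Rolle) and reversal, and these operations cut the
polynomial down to a real-rooted quadratic, whose discriminant is nonnegative.
-/

open Finset

namespace Polynomial

theorem Splits.reverse {K : Type*} [Field K] {p : K[X]} (hp : p.Splits) : p.reverse.Splits := by
  induction hp using Submonoid.closure_induction with
  | mem f hf =>
    have hf1 : f.natDegree ≤ 1 := by
      rcases hf with ⟨a, rfl⟩ | ⟨a, rfl⟩
      · exact (natDegree_C a).trans_le zero_le_one
      · exact (natDegree_X_add_C a).le
    exact Splits.of_natDegree_le_one ((reverse_natDegree_le f).trans hf1)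
  | one => rw [← C_1, reverse_C]; exact Splits.C 1
  | mul f g _ _ hf hg => rw [reverse_mul_of_domain]; exact hf.mul hg

theorem splits_derivative {p : ℝ[X]} (hp : p.Splits) : (derivative p).Splits := by
  rcases eq_or_ne (derivative p) 0 with h0 | h0
  · rw [h0]; exact Splits.zero
  have hnd : p.natDegree ≠ 0 := fun h => h0 (derivative_of_natDegree_zero h)
  rw [splits_iff_card_roots] at hp ⊢
  have := p.card_roots_le_derivative
  have := (derivative p).card_roots'
  have := natDegree_derivative_lt hnd
  omega

theorem splits_iterate_derivative {p : ℝ[X]} (hp : p.Splits) (k : ℕ) :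
    (derivative^[k] p).Splits := by
  induction k with
  | zero => exact hp
  | succ k ih => rw [Function.iterate_succ_apply']; exact splits_derivative ih

theorem natDegree_iterate_derivative_eq {R : Type*} [Semiring R] [IsAddTorsionFree R] (p : R[X])
    (k : ℕ) :
    (derivative^[k] p).natDegree = p.natDegree - k := by
  induction k with
  | zero => simp
  | succ k ih =>
    rw [Function.iterate_succ_apply', natDegree_derivative, ih]
    exact Nat.sub_sub _ _ _

/-- Newton's inequality `c_u c_{u+2} ≤ c_{u+1}²` for the normalized coefficients
`c_j = p.coeff j / (m choose j)`, `m = p.natDegree`, with the binomial coefficients cleared. -/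
def NewtonIneq (p : ℝ[X]) (u : ℕ) : Prop :=
  ((u : ℝ) + 2) * (p.natDegree - u) * (p.coeff u * p.coeff (u + 2)) ≤
    ((u : ℝ) + 1) * (p.natDegree - u - 1) * p.coeff (u + 1) ^ 2

theorem newtonIneq_of_natDegree_eq_two {p : ℝ[X]} (hp : p.Splits) (h2 : p.natDegree = 2) :
    NewtonIneq p 0 := by
  obtain ⟨x, hx⟩ := hp.exists_eval_eq_zero (degree_ne_of_natDegree_ne (n := 0) (by omega))
  have hquad : p.coeff 2 * (x * x) + p.coeff 1 * x + p.coeff 0 = 0 := by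
    rw [eval_eq_sum_range, h2] at hx
    simp only [Finset.sum_range_succ, Finset.sum_range_zero] at hx
    linear_combination hx
  have hdiscrim := discrim_eq_sq_of_quadratic_eq_zero hquad
  unfold NewtonIneq discrim at *
  rw [h2]
  norm_num
  nlinarith [sq_nonneg (2 * p.coeff 2 * x + p.coeff 1)]

theorem NewtonIneq.of_derivative {p : ℝ[X]} {u : ℕ} (hu : u + 3 ≤ p.natDegree)
    (h : NewtonIneq (derivative p) u) : NewtonIneq p (u + 1) := by
  unfold NewtonIneq at *
  simp only [coeff_derivative, natDegree_derivative] at h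
  rw [Nat.cast_sub (by omega : 1 ≤ p.natDegree)] at h
  refine le_of_mul_le_mul_left ?_ (by positivity : (0 : ℝ) < (u + 1) * (u + 2))
  push_cast at h ⊢
  linear_combination h

theorem NewtonIneq.of_iterate_derivative {p : ℝ[X]} {u : ℕ} (hu : u + 2 ≤ p.natDegree)
    (h : NewtonIneq (derivative^[u] p) 0) : NewtonIneq p u := by
  induction u generalizing p with
  | zero => exact h
  | succ u ih =>
    rw [Function.iterate_succ_apply] at h
    exact .of_derivative hu (ih (by rw [natDegree_derivative]; omega) h)

theorem NewtonIneq.of_reverse {p : ℝ[X]} (h0 : p.coeff 0 ≠ 0) (h2 : 2 ≤ p.natDegree)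
    (h : NewtonIneq p.reverse (p.natDegree - 2)) : NewtonIneq p 0 := by
  have hdeg : p.reverse.natDegree = p.natDegree := by
    rw [reverse_natDegree, natTrailingDegree_eq_zero.2 (.inr h0), Nat.sub_zero]
  unfold NewtonIneq at *
  simp only [coeff_reverse, hdeg] at h
  rw [revAt_le (by omega), revAt_le (by omega), revAt_le (by omega),
    Nat.cast_sub h2] at h
  rw [show p.natDegree - (p.natDegree - 2) = 2 by omega,
    show p.natDegree - (p.natDegree - 2 + 1) = 1 by omega,
    show p.natDegree - (p.natDegree - 2 + 2) = 0 by omega] at h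
  push_cast at h ⊢
  linarith

theorem Splits.newtonIneq {p : ℝ[X]} (hp : p.Splits) {u : ℕ} (hu : u + 2 ≤ p.natDegree) :
    NewtonIneq p u := by
  refine .of_iterate_derivative hu ?_
  set q := derivative^[u] p
  have hq : q.natDegree = p.natDegree - u := natDegree_iterate_derivative_eq p u
  rcases eq_or_ne (q.coeff 0) 0 with h0 | h0
  · have : (2 : ℝ) ≤ q.natDegree := by rw [hq]; exact_mod_cast (by omega : 2 ≤ p.natDegree - u)
    unfold NewtonIneq
    rw [h0]
    norm_num
    nlinarith [sq_nonneg (q.coeff 1)]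
  refine .of_reverse h0 (by omega) (.of_iterate_derivative ?_ ?_)
  · rw [reverse_natDegree, natTrailingDegree_eq_zero.2 (.inr h0)]; omega
  refine newtonIneq_of_natDegree_eq_two
    (splits_iterate_derivative (splits_iterate_derivative hp u).reverse _) ?_
  rw [natDegree_iterate_derivative_eq, reverse_natDegree,
    natTrailingDegree_eq_zero.2 (.inr h0)]
  omega

end Polynomial

namespace Multiset

theorem esymm_eq_zero_of_card_lt {R : Type*} [CommSemiring R] {s : Multiset R} {j : ℕ}
    (h : card s < j) : s.esymm j = 0 := by
  rw [esymm, powersetCard_eq_empty j h, map_zero, sum_zero]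

theorem esymm_cons_succ {R : Type*} [CommSemiring R] (a : R) (s : Multiset R) (j : ℕ) :
    (a ::ₘ s).esymm (j + 1) = s.esymm (j + 1) + a * s.esymm j := by
  simp only [esymm, powersetCard_cons, map_add, sum_add, map_map, Function.comp_def, prod_cons,
    sum_map_mul_left]

open Polynomial in
theorem esymm_mul_esymm_le_esymm_sq (s : Multiset ℝ) (t : ℕ) :
    ((t : ℝ) + 2) * (card s - t) * (s.esymm t * s.esymm (t + 2)) ≤
      ((t : ℝ) + 1) * (card s - t - 1) * s.esymm (t + 1) ^ 2 := by
  rcases lt_or_ge (card s) (t + 2) with hlt | hle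
  · have hsq : ((card s : ℝ) - t - 1) * s.esymm (t + 1) ^ 2 = 0 := by
      rcases lt_or_ge (card s) (t + 1) with hlt' | hge
      · rw [esymm_eq_zero_of_card_lt hlt']; ring
      · rw [show card s = t + 1 by omega]; push_cast; ring
    rw [esymm_eq_zero_of_card_lt hlt, mul_assoc _ _ (s.esymm (t + 1) ^ 2), hsq]
    simp
  set p : ℝ[X] := (s.map fun r => X + C r).prod
  have hdeg : p.natDegree = card s := by
    rw [natDegree_multiset_prod_of_monic _ (by simp [monic_X_add_C])]
    simp
  have hcoeff : ∀ j ≤ card s, p.coeff (card s - j) = s.esymm j := fun j hj => by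
    rw [prod_X_add_C_coeff s (Nat.sub_le _ _), Nat.sub_sub_self hj]
  have hnewton : NewtonIneq p (card s - (t + 2)) :=
    (Splits.multisetProd (by simp)).newtonIneq (by rw [hdeg]; omega)
  unfold NewtonIneq at hnewton
  rw [hdeg, show card s - (t + 2) + 1 = card s - (t + 1) by omega,
    show card s - (t + 2) + 2 = card s - t by omega, hcoeff (t + 2) hle, hcoeff t (by omega),
    hcoeff (t + 1) (by omega), Nat.cast_sub hle] at hnewton
  push_cast at hnewton
  linarith

end Multiset

theorem esym_eq_esymm {n : ℕ} (S : Finset (Fin n)) (μ : Fin n → ℝ) (j : ℕ) :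
    esym S μ j = (S.val.map μ).esymm j :=
  (Finset.esymm_map_val μ S j).symm

theorem esym_mul_esym_le_esym_sq {n : ℕ} (S : Finset (Fin n)) (μ : Fin n → ℝ) (t : ℕ) :
    ((t : ℝ) + 2) * (#S - t) * (esym S μ t * esym S μ (t + 2)) ≤
      ((t : ℝ) + 1) * (#S - t - 1) * esym S μ (t + 1) ^ 2 := by
  simpa only [esym_eq_esymm, Multiset.card_map, card_val] using
    (S.val.map μ).esymm_mul_esymm_le_esymm_sq t

theorem esym_succ_eq_esym_erase_add {n : ℕ} {S : Finset (Fin n)} (μ : Fin n → ℝ) {x : Fin n}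
    (hx : x ∈ S) (j : ℕ) :
    esym S μ (j + 1) = esym (S.erase x) μ (j + 1) + μ x * esym (S.erase x) μ j := by
  rw [esym_eq_esymm, ← Multiset.cons_erase hx, Multiset.map_cons,
    Multiset.esymm_cons_succ, esym_eq_esymm, esym_eq_esymm, erase_val]

theorem stmt8_general (n k : ℕ) (hk : 2 ≤ k) (hkn : k ≤ n - 1)
    (μ : Fin n → ℝ) (lst : Fin n)
    (i : Fin n) (hi : i ≠ lst)
    (hpos : 0 < esym (Finset.univ.erase lst) μ (k - 1)) :
    esym (Finset.univ.erase i) μ (k - 1) ≥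
      (1 / esym (Finset.univ.erase lst) μ (k - 1)) *
        ((1 - (((k : ℝ) - 1) * ((n : ℝ) - (k : ℝ) - 1)) / ((k : ℝ) * ((n : ℝ) - (k : ℝ))))
            * (esym ((Finset.univ.erase i).erase lst) μ (k - 1)) ^ 2
          + esym ((Finset.univ.erase i).erase lst) μ (k - 2) * esym Finset.univ μ k) := by
  obtain ⟨t, rfl⟩ : ∃ t, k = t + 2 := ⟨k - 2, by omega⟩
  simp only [Nat.add_sub_cancel, show t + 2 - 1 = t + 1 from rfl] at hpos ⊢
  set S := (univ.erase i).erase lst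
  have hlst_mem : lst ∈ univ.erase i := mem_erase.2 ⟨hi.symm, mem_univ _⟩
  have h_erase_i := esym_succ_eq_esym_erase_add μ hlst_mem t
  have h_erase_lst := esym_succ_eq_esym_erase_add μ (mem_erase.2 ⟨hi, mem_univ i⟩) t
  rw [erase_right_comm] at h_erase_lst
  have h_univ := esym_succ_eq_esym_erase_add μ (mem_univ i) (t + 1)
  rw [h_erase_i, esym_succ_eq_esym_erase_add μ hlst_mem (t + 1)] at h_univ
  have hcard : (#S : ℝ) = n - 2 := by
    rw [card_erase_of_mem hlst_mem, card_erase_of_mem (mem_univ i), card_univ, Fintype.card_fin,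
      Nat.cast_sub (by omega), Nat.cast_sub (by omega)]
    ring
  have hnewton := esym_mul_esym_le_esym_sq S μ t
  rw [hcard] at hnewton
  have htn : (t : ℝ) + 3 ≤ n := by exact_mod_cast (by omega : t + 3 ≤ n)
  have hden : (0 : ℝ) < (t + 2) * (n - t - 2) := mul_pos (by positivity) (by linarith)
  have hratio : esym S μ t * esym S μ (t + 2) ≤
      (t + 1) * (n - t - 3) / ((t + 2) * (n - t - 2)) * esym S μ (t + 1) ^ 2 := by
    rw [div_mul_eq_mul_div, le_div_iff₀ hden]
    linarith
  rw [ge_iff_le, h_erase_i, one_div, inv_mul_le_iff₀ hpos, h_erase_lst, h_univ]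
  push_cast
  linear_combination hratio

theorem stmt8 (n k : ℕ) (hn : 3 ≤ n) (hk : 2 ≤ k) (hkn : k ≤ n - 1)
    (μ : Fin n → ℝ) (lst : Fin n) (hlst : (lst : ℕ) = n - 1)
    (i : Fin n) (hi : i ≠ lst)
    (hpos : 0 < esym (Finset.univ.erase lst) μ (k - 1)) :
    esym (Finset.univ.erase i) μ (k - 1) ≥
      (1 / esym (Finset.univ.erase lst) μ (k - 1)) *
        ((1 - (((k : ℝ) - 1) * ((n : ℝ) - (k : ℝ) - 1)) / ((k : ℝ) * ((n : ℝ) - (k : ℝ))))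
            * (esym ((Finset.univ.erase i).erase lst) μ (k - 1)) ^ 2
          + esym ((Finset.univ.erase i).erase lst) μ (k - 2) * esym Finset.univ μ k) :=
  stmt8_general n k hk hkn μ lst i hi hpos
end
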